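/- For every odd integer n ≥ 3 and every integer λ ≥ 1, the harmonious total chromatic number of the complete multigraph λK_n satisfies h_t(λK_n) ≥ (λ−1)n + (3n+1)/2. -/

import Mathlib

/-!
Count the vertex–edge incidences of `λK_n`: there are `λ n (n - 1)` of them, and a harmonious
colouring with `k` colours sends them injectively to colour pairs `{c v, c e}`. If the edge
colour is a vertex colour `c u`, then `u ≠ v` and the pair is one of the `n.choose 2` pairs of
vertex colours. Every other colour `c` is used on at most `n` incidences (the pairs `{c v, c}`
differ in `v`), and on an even number of them since each edge has two ends; as `n` is odd this
is at most `n - 1`. Hence `λ n (n - 1) ≤ n (n - 1) / 2 + (k - n) (n - 1)`, i.e. `k ≥ λ n + n / 2`.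
-/

/-- A harmonious total colouring of the complete multigraph `λK_n` with `k` colours.
Vertices are `Fin n`; the `lam` parallel edges joining a pair `e` of distinct vertices
are `(e, i)` for `i : Fin lam`.  The colouring is proper on vertices (all vertices are
pairwise adjacent), on edges sharing an endpoint (in particular parallel edges), and on
vertex-edge incidences; moreover the unordered pairs `{cv v, ce e i}` over incident
vertex-edge pairs are pairwise distinct. -/
def IsHarmoniousTotalColoringM (n lam k : ℕ)
    (cv : Fin n → Fin k) (ce : Sym2 (Fin n) → Fin lam → Fin k) : Prop :=
  (∀ u v : Fin n, u ≠ v → cv u ≠ cv v) ∧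
  (∀ (e f : Sym2 (Fin n)) (i j : Fin lam), ¬ e.IsDiag → ¬ f.IsDiag → (e, i) ≠ (f, j) →
    (∃ v, v ∈ e ∧ v ∈ f) → ce e i ≠ ce f j) ∧
  (∀ (v : Fin n) (e : Sym2 (Fin n)) (i : Fin lam), ¬ e.IsDiag → v ∈ e → cv v ≠ ce e i) ∧
  (∀ (v : Fin n) (e : Sym2 (Fin n)) (i : Fin lam) (w : Fin n) (f : Sym2 (Fin n)) (j : Fin lam),
    ¬ e.IsDiag → ¬ f.IsDiag → v ∈ e → w ∈ f →
    s(cv v, ce e i) = s(cv w, ce f j) → v = w ∧ e = f ∧ i = j)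

/-- The harmonious total chromatic number of the complete multigraph `λK_n`. -/
noncomputable def harmoniousTotalChromaticNumberM (n lam : ℕ) : ℕ :=
  sInf {k | ∃ cv ce, IsHarmoniousTotalColoringM n lam k cv ce}

open Finset

section Incidences

variable {α ι : Type*} [Fintype α] [DecidableEq α]

def incidences (F : Finset (Sym2 α × ι)) : Finset (α × (Sym2 α × ι)) :=
  (univ ×ˢ F).filter fun p => p.1 ∈ p.2.1

theorem mem_incidences {F : Finset (Sym2 α × ι)} {p : α × (Sym2 α × ι)} :
    p ∈ incidences F ↔ p.2 ∈ F ∧ p.1 ∈ p.2.1 := by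
  simp [incidences]

theorem card_incidences {F : Finset (Sym2 α × ι)} (hF : ∀ q ∈ F, ¬ q.1.IsDiag) :
    #(incidences F) = 2 * #F := by
  rw [incidences, card_filter, sum_product_right, mul_comm, ← smul_eq_mul, ← sum_const]
  refine sum_congr rfl fun q hq => ?_
  rw [← card_filter, ← q.1.card_toFinset_of_not_isDiag (hF q hq)]
  congr 1
  ext v
  simp

end Incidences

abbrev completeMultigraphEdges (n lam : ℕ) : Finset (Sym2 (Fin n) × Fin lam) :=
  (⊤ : SimpleGraph (Fin n)).edgeFinset ×ˢ univ

theorem not_isDiag_of_mem_completeMultigraphEdges {n lam : ℕ} {q : Sym2 (Fin n) × Fin lam}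
    (hq : q ∈ completeMultigraphEdges n lam) : ¬ q.1.IsDiag := by
  simpa using hq

theorem card_completeMultigraphEdges (n lam : ℕ) :
    #(completeMultigraphEdges n lam) = n.choose 2 * lam := by
  rw [card_product, SimpleGraph.card_edgeFinset_top_eq_card_choose_two, card_univ,
    Fintype.card_fin, Fintype.card_fin]

theorem card_incidences_of_subset_completeMultigraphEdges {n lam : ℕ}
    {F : Finset (Sym2 (Fin n) × Fin lam)} (hF : F ⊆ completeMultigraphEdges n lam) :
    #(incidences F) = 2 * #F :=
  card_incidences fun _ hq => not_isDiag_of_mem_completeMultigraphEdges (hF hq)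

theorem exists_isHarmoniousTotalColoringM (n lam : ℕ) :
    ∃ k cv ce, IsHarmoniousTotalColoringM n lam k cv ce := by
  let F := Fintype.equivFin (Fin n ⊕ Sym2 (Fin n) × Fin lam)
  refine ⟨_, fun v => F (.inl v), fun e i => F (.inr (e, i)), ?_, ?_, ?_, ?_⟩
  · intro u v huv h
    exact huv (by simpa using h)
  · intro e f i j _ _ hne _ h
    exact hne (by simpa using h)
  · intro v e i _ _ h
    simp at h
  · intro v e i w f j _ _ _ _ h
    rcases Sym2.eq_iff.mp h with ⟨hv, he⟩ | ⟨h', -⟩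
    · simpa using And.intro hv he
    · simp at h'

namespace IsHarmoniousTotalColoringM

variable {n lam k : ℕ} {cv : Fin n → Fin k} {ce : Sym2 (Fin n) → Fin lam → Fin k}

theorem injective_vertexColor (H : IsHarmoniousTotalColoringM n lam k cv ce) :
    Function.Injective cv :=
  fun u v => not_imp_not.mp (H.1 u v)

theorem injOn_incidences (H : IsHarmoniousTotalColoringM n lam k cv ce)
    {F : Finset (Sym2 (Fin n) × Fin lam)} (hF : F ⊆ completeMultigraphEdges n lam) :
    Set.InjOn (fun p : Fin n × (Sym2 (Fin n) × Fin lam) => s(cv p.1, ce p.2.1 p.2.2))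
      (incidences F) := by
  rintro ⟨v, e, i⟩ hp ⟨w, f, j⟩ hq h
  rw [mem_coe, mem_incidences] at hp hq
  obtain ⟨rfl, rfl, rfl⟩ := H.2.2.2 v e i w f j
    (not_isDiag_of_mem_completeMultigraphEdges (hF hp.1))
    (not_isDiag_of_mem_completeMultigraphEdges (hF hq.1)) hp.2 hq.2 h
  rfl

theorem two_mul_card_edgeColorClass_le (H : IsHarmoniousTotalColoringM n lam k cv ce)
    (c : Fin k) :
    2 * #((completeMultigraphEdges n lam).filter fun q => ce q.1 q.2 = c) ≤ n := by
  have hF := filter_subset (fun q => ce q.1 q.2 = c) (completeMultigraphEdges n lam)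
  rw [← card_incidences_of_subset_completeMultigraphEdges hF]
  calc _ ≤ #(univ : Finset (Fin n)) :=
        card_le_card_of_injOn Prod.fst (fun _ _ => mem_coe.2 (mem_univ _)) ?_
    _ = n := card_fin n
  intro p hp q hq hpq
  have hpc := (mem_filter.1 (mem_incidences.1 hp).1).2
  have hqc := (mem_filter.1 (mem_incidences.1 hq).1).2
  refine H.injOn_incidences hF hp hq ?_
  simp only at hpq ⊢
  rw [hpc, hqc, hpq]

theorem two_mul_card_filter_mem_image_le (H : IsHarmoniousTotalColoringM n lam k cv ce) :
    2 * #((completeMultigraphEdges n lam).filter fun q => ce q.1 q.2 ∈ univ.image cv) ≤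
      n.choose 2 := by
  have hF := filter_subset (fun q => ce q.1 q.2 ∈ univ.image cv) (completeMultigraphEdges n lam)
  rw [← card_incidences_of_subset_completeMultigraphEdges hF]
  calc _ ≤ #((⊤ : SimpleGraph (Fin n)).edgeFinset.image (Sym2.map cv)) :=
        card_le_card_of_injOn _ ?_ (H.injOn_incidences hF)
    _ ≤ #(⊤ : SimpleGraph (Fin n)).edgeFinset := card_image_le
    _ = n.choose 2 := by rw [SimpleGraph.card_edgeFinset_top_eq_card_choose_two, Fintype.card_fin]
  rintro ⟨v, e, i⟩ hp
  obtain ⟨he, hv⟩ := mem_incidences.1 hp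
  obtain ⟨u, -, hu⟩ := mem_image.1 (mem_filter.1 he).2
  have hvu : v ≠ u := fun hvu => H.2.2.1 v e i
    (not_isDiag_of_mem_completeMultigraphEdges (hF he)) hv (hvu ▸ hu)
  exact mem_coe.2 (mem_image.2 ⟨s(v, u), by simpa using hvu, by simp [hu]⟩)


theorem two_mul_card_filter_not_mem_image_le (H : IsHarmoniousTotalColoringM n lam k cv ce)
    (hn : Odd n) :
    2 * #((completeMultigraphEdges n lam).filter fun q => ce q.1 q.2 ∉ univ.image cv) ≤
      (k - n) * (n - 1) := by
  set F := (completeMultigraphEdges n lam).filter fun q => ce q.1 q.2 ∉ univ.image cv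
  rw [card_eq_sum_card_fiberwise (f := fun q => ce q.1 q.2) (s := F) (t := (univ.image cv)ᶜ)
    (fun q hq => mem_compl.2 (mem_filter.1 hq).2), mul_sum]
  calc _ ≤ ∑ _c ∈ (univ.image cv)ᶜ, (n - 1) := sum_le_sum fun c _ => ?_
    _ = (k - n) * (n - 1) := by
      rw [sum_const, card_compl, card_image_of_injective _ H.injective_vertexColor,
        Fintype.card_fin, card_fin, smul_eq_mul]
  have hsub : F.filter (fun q => ce q.1 q.2 = c) ⊆
      (completeMultigraphEdges n lam).filter fun q => ce q.1 q.2 = c :=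
    filter_subset_filter _ (filter_subset _ _)
  have hc := (H.two_mul_card_edgeColorClass_le c).trans'
    (Nat.mul_le_mul_left 2 (card_le_card hsub))
  -- an even number that is at most the odd number `n`
  obtain ⟨m, rfl⟩ := hn
  omega

theorem two_mul_card_completeMultigraphEdges_le (H : IsHarmoniousTotalColoringM n lam k cv ce)
    (hn : Odd n) :
    2 * #(completeMultigraphEdges n lam) ≤ n.choose 2 + (k - n) * (n - 1) := by
  rw [← card_filter_add_card_filter_not fun q => ce q.1 q.2 ∈ univ.image cv, mul_add]
  exact add_le_add H.two_mul_card_filter_mem_image_le (H.two_mul_card_filter_not_mem_image_le hn)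

end IsHarmoniousTotalColoringM

theorem le_of_two_mul_choose_two_mul_le {n lam k : ℕ} (hlam : 1 ≤ lam) (hn : 3 ≤ n)
    (hno : Odd n) (h : 2 * (n.choose 2 * lam) ≤ n.choose 2 + (k - n) * (n - 1)) :
    (lam - 1) * n + (3 * n + 1) / 2 ≤ k := by
  have hchoose : 2 * n.choose 2 = n * (n - 1) := by
    rw [Nat.choose_two_right, Nat.mul_div_cancel' (Nat.even_mul_pred_self n).two_dvd]
  have hcancel : 2 * lam * n * (n - 1) ≤ (n + 2 * (k - n)) * (n - 1) := by
    calc 2 * lam * n * (n - 1) = 2 * lam * (2 * n.choose 2) := by rw [hchoose, mul_assoc]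
      _ = 2 * (2 * (n.choose 2 * lam)) := by ring
      _ ≤ 2 * (n.choose 2 + (k - n) * (n - 1)) := Nat.mul_le_mul_left 2 h
      _ = (n + 2 * (k - n)) * (n - 1) := by rw [mul_add, hchoose]; ring
  have := Nat.le_of_mul_le_mul_right hcancel (by omega)
  have hlamn : lam * n = (lam - 1) * n + n := by
    rw [Nat.sub_one_mul, Nat.sub_add_cancel (Nat.le_mul_of_pos_left n hlam)]
  obtain ⟨m, rfl⟩ := hno
  rw [mul_assoc] at this
  omega

/-- For every odd `n ≥ 3` and every `λ ≥ 1`,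
`h_t(λK_n) ≥ (λ - 1)n + (3n + 1)/2`. -/
theorem ht_multigraph_lower_odd (n lam : ℕ) (hlam : 1 ≤ lam) (hn : 3 ≤ n) (hno : Odd n) :
    (lam - 1) * n + (3 * n + 1) / 2 ≤ harmoniousTotalChromaticNumberM n lam := by
  obtain ⟨k₀, hk₀⟩ := exists_isHarmoniousTotalColoringM n lam
  refine le_csInf ⟨k₀, hk₀⟩ ?_
  rintro k ⟨cv, ce, H⟩
  have hcount := H.two_mul_card_completeMultigraphEdges_le hno
  rw [card_completeMultigraphEdges] at hcount
  exact le_of_two_mul_choose_two_mul_le hlam hn hno hcount
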